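/- For every integer r ≥ 3, for every maximum matching M of the graph H_{2r+1,2r} there exist two distinct M-unsaturated vertices that have a common neighbor. -/

import Mathlib

/-- A matching `M` of `G` is maximum if no matching of `G` has more edges. -/
def SimpleGraph.IsMaximumMatching {α : Type*} (G : SimpleGraph α) (M : G.Subgraph) : Prop :=
  M.IsMatching ∧ ∀ M' : G.Subgraph, M'.IsMatching → M'.edgeSet.ncard ≤ M.edgeSet.ncard

/-- The (underlying simple) graph `H_n` of the paper (used with `n = 2r + 1`):
the vertices `x, y, z` are encoded as `Sum.inl 0, Sum.inl 1, Sum.inl 2`, the vertex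
`v_{k+1}^{(i)}` is encoded as `Sum.inr (k, i)`; `x` is joined to every `v_1^{(i)}`,
`y` to every `v_2^{(i)}`, `z` to every `v_3^{(i)}`, and for each `i` there are the
edges `v_1^{(i)} v_2^{(i)}` and `v_2^{(i)} v_3^{(i)}` (but not `v_3^{(i)} v_1^{(i)}`). -/
def HGraph (n : ℕ) : SimpleGraph (Fin 3 ⊕ Fin 3 × Fin n) where
  Adj a b :=
    match a, b with
    | .inl k, .inr p => p.1 = k
    | .inr p, .inl k => p.1 = k
    | .inr p, .inr q => p.2 = q.2 ∧ ((p.1 : ℕ) + 1 = (q.1 : ℕ) ∨ (q.1 : ℕ) + 1 = (p.1 : ℕ))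
    | _, _ => False
  symm := by
    constructor
    rintro (k | p) (k' | q) h
    · exact h
    · exact h
    · exact h
    · exact ⟨h.1.symm, h.2.symm⟩
  loopless := by
    constructor
    rintro (k | p) h
    · exact h
    · rcases h.2 with h2 | h2 <;> omega

/-!
Call `x, y, z` the hubs and `v_1^{(i)}, v_2^{(i)}, v_3^{(i)}` the `i`-th leg. In any matching,
each leg `i` has a position `k` such that either the `k`-th hub is matched to `v_k^{(i)}`, or
`v_k^{(i)}` is unsaturated: otherwise `v_1^{(i)}` and `v_3^{(i)}`, whose only other neighbour is
`v_2^{(i)}`, would both be matched to `v_2^{(i)}`. Each hub is matched into at most one leg, so at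
least `2r + 1 - 3 > 3` legs have an unsaturated vertex at their chosen position, and two of these
positions coincide; the two unsaturated vertices then share the corresponding hub as a neighbour.
-/

open Finset SimpleGraph

namespace HGraph

variable {n : ℕ}

lemma eq_hub_or_eq_middle_of_adj {k : Fin 3} (hk : k ≠ 1) {i : Fin n} {c : Fin 3 ⊕ Fin 3 × Fin n}
    (h : (HGraph n).Adj (.inr (k, i)) c) : c = .inl k ∨ c = .inr (1, i) := by
  rcases c with k' | ⟨k', j⟩
  · have hkk' : k = k' := h
    exact .inl (hkk' ▸ rfl)
  · obtain ⟨rfl, hkk'⟩ : i = j ∧ ((k : ℕ) + 1 = k' ∨ (k' : ℕ) + 1 = k) := h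
    have := Fin.val_ne_iff.mpr hk
    have : k' = 1 := by omega
    exact .inr (this ▸ rfl)

variable {M : (HGraph n).Subgraph}

lemma exists_hub_adj_or_forall_not_adj (hM : M.IsMatching) (i : Fin n) :
    ∃ k : Fin 3, M.Adj (.inl k) (.inr (k, i)) ∨ ∀ c, ¬ M.Adj (.inr (k, i)) c := by
  by_contra! h
  have matched_to_middle : ∀ k : Fin 3, k ≠ 1 → M.Adj (.inr (k, i)) (.inr (1, i)) := by
    intro k hk
    obtain ⟨hhub, c, hc⟩ := h k
    obtain rfl | rfl := eq_hub_or_eq_middle_of_adj hk (M.adj_sub hc)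
    · exact absurd hc.symm hhub
    · exact hc
  have := hM.eq_of_adj_right (matched_to_middle 0 (by decide)) (matched_to_middle 2 (by decide))
  simp at this

lemma injOn_hub_adj (hM : M.IsMatching) (f : Fin n → Fin 3) :
    Set.InjOn f {i | M.Adj (.inl (f i)) (.inr (f i, i))} := by
  intro i hi j hj hij
  rw [Set.mem_ofPred_eq] at hi hj
  rw [hij] at hi
  simpa using hM.eq_of_adj_left hi hj

end HGraph

/-- For every maximum matching `M` of `H_{2r+1,2r}` there exist two distinct
`M`-unsaturated vertices that have a common neighbor. -/
theorem stmt_11 (r : ℕ) (hr : 3 ≤ r) (M : (HGraph (2 * r + 1)).Subgraph)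
    (hM : (HGraph (2 * r + 1)).IsMaximumMatching M) :
    ∃ a b, a ≠ b ∧ (∀ c, ¬ M.Adj a c) ∧ (∀ c, ¬ M.Adj b c) ∧
      ∃ w, (HGraph (2 * r + 1)).Adj w a ∧ (HGraph (2 * r + 1)).Adj w b := by
  classical
  obtain ⟨hM, -⟩ := hM
  choose f hf using HGraph.exists_hub_adj_or_forall_not_adj hM
  set T := ({i | ∀ c, ¬ M.Adj (.inr (f i, i)) c} : Finset _)
  have hT : #(univ : Finset (Fin 3)) < #T := by
    have hTc : #Tᶜ ≤ 3 := by
      refine card_le_card_of_injOn f (fun _ _ ↦ mem_coe.2 (mem_univ _)) ?_ |>.trans (by simp)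
      refine (HGraph.injOn_hub_adj hM f).mono fun i hi ↦ ?_
      simp only [T, compl_filter, coe_filter, mem_univ, true_and, Set.mem_ofPred_eq] at hi
      exact (hf i).resolve_right hi
    have := card_add_card_compl T
    simp only [card_univ, Fintype.card_fin] at this ⊢
    omega
  obtain ⟨i, hi, j, hj, hij, hfij⟩ :=
    exists_ne_map_eq_of_card_lt_of_maps_to hT fun _ _ ↦ mem_coe.2 (mem_univ _)
  refine ⟨.inr (f i, i), .inr (f j, j), by simp [hij], (mem_filter.1 hi).2, (mem_filter.1 hj).2,
    .inl (f i), rfl, hfij.symm⟩
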